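/- Suppose (L_i)_{1 ≤ i ≤ n} are nonnegative reals with L_n = K_g and L_{i-1} ≤ max(L_i e^{K_1 Δt_i} + K_2 Δt_i, L_n) for i = 2,...,n, where K_1, K_2 ≥ 0 and Δt_i > 0 with Σ_{i=1}^n Δt_i = T. Then max_{1 ≤ i ≤ n} L_i ≤ e^{K_1 T}(K_g + K_2 T). -/

import Mathlib

/-!
Put `Rᵢ := Δt_{i+1} + ⋯ + Δt_n`, the time remaining after step `i`. Backward induction from
`i = n` shows `L_i ≤ B(Rᵢ)` for the comparison function `B(s) := e^{K₁ s} (K_g + K₂ s)`, which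
absorbs one step of the recursion, `B(s) e^{K₁ d} + K₂ d ≤ B(s + d)`, and dominates `K_g`.
Since `Rᵢ ≤ T`, the claimed uniform bound follows.
-/

open Finset Real

noncomputable def expAffineBound (K₁ K₂ Kg s : ℝ) : ℝ := exp (K₁ * s) * (Kg + K₂ * s)

section ExpAffineBound

variable {K₁ K₂ Kg s : ℝ}

lemma expAffineBound_mul_exp_add_le {d : ℝ} (hK₁ : 0 ≤ K₁) (hK₂ : 0 ≤ K₂) (hs : 0 ≤ s)
    (hd : 0 ≤ d) :
    expAffineBound K₁ K₂ Kg s * exp (K₁ * d) + K₂ * d ≤ expAffineBound K₁ K₂ Kg (d + s) := by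
  have hexp : 1 ≤ exp (K₁ * (d + s)) := one_le_exp (by positivity)
  have hstep := mul_le_mul_of_nonneg_right hexp (mul_nonneg hK₂ hd)
  rw [expAffineBound, expAffineBound, mul_add K₁ d s, exp_add] at *
  nlinarith

lemma le_expAffineBound (hK₁ : 0 ≤ K₁) (hK₂ : 0 ≤ K₂) (hKg : 0 ≤ Kg) (hs : 0 ≤ s) :
    Kg ≤ expAffineBound K₁ K₂ Kg s :=
  calc Kg ≤ Kg + K₂ * s := le_add_of_nonneg_right (by positivity)
    _ ≤ exp (K₁ * s) * (Kg + K₂ * s) :=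
      le_mul_of_one_le_left (by positivity) (one_le_exp (by positivity))

lemma expAffineBound_le_expAffineBound {t : ℝ} (hK₁ : 0 ≤ K₁) (hK₂ : 0 ≤ K₂) (hKg : 0 ≤ Kg)
    (hs : 0 ≤ s) (hst : s ≤ t) :
    expAffineBound K₁ K₂ Kg s ≤ expAffineBound K₁ K₂ Kg t := by
  unfold expAffineBound
  gcongr

end ExpAffineBound

lemma sum_Ioc_eq_add_sum_Ioc_succ {M : Type*} [AddCommMonoid M] (f : ℕ → M) {i n : ℕ} (hin : i < n) :
    ∑ j ∈ Ioc i n, f j = f (i + 1) + ∑ j ∈ Ioc (i + 1) n, f j := by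
  rw [← insert_Ioc_add_one_left_eq_Ioc hin, sum_insert (by simp)]

/-- Discrete backward Gronwall inequality. -/
theorem le_expAffineBound_of_le_max {m n : ℕ} {K₁ K₂ : ℝ} {Δt L : ℕ → ℝ}
    (hK₁ : 0 ≤ K₁) (hK₂ : 0 ≤ K₂) (hΔt : ∀ j ∈ Ioc m n, 0 ≤ Δt j) (hLn : 0 ≤ L n)
    (hrec : ∀ k, m ≤ k → k < n →
      L k ≤ max (L (k + 1) * exp (K₁ * Δt (k + 1)) + K₂ * Δt (k + 1)) (L n))
    {i : ℕ} (hmi : m ≤ i) (hin : i ≤ n) :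
    L i ≤ expAffineBound K₁ K₂ (L n) (∑ j ∈ Ioc i n, Δt j) := by
  have htail : ∀ k, m ≤ k → 0 ≤ ∑ j ∈ Ioc k n, Δt j := fun k hk =>
    sum_nonneg fun j hj => hΔt j (Ioc_subset_Ioc_left hk hj)
  refine Nat.decreasingInduction' (P := fun k =>
    L k ≤ expAffineBound K₁ K₂ (L n) (∑ j ∈ Ioc k n, Δt j)) ?_ hin (by simp [expAffineBound])
  intro k hkn hik ih
  have hk : m ≤ k := hmi.trans hik
  refine (hrec k hk hkn).trans (max_le ?_ ?_)
  · rw [sum_Ioc_eq_add_sum_Ioc_succ Δt hkn]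
    exact (add_le_add_left (mul_le_mul_of_nonneg_right ih (exp_pos _).le) _).trans
      (expAffineBound_mul_exp_add_le hK₁ hK₂ (htail _ (by omega)) (hΔt _ (by grind)))
  · exact le_expAffineBound hK₁ hK₂ hLn (htail k hk)

theorem lipschitz_constants_uniform_bound_general
    (n : ℕ) (T K₁ K₂ Kg : ℝ) (hK₁ : 0 ≤ K₁) (hK₂ : 0 ≤ K₂)
    (Δt : ℕ → ℝ) (hΔt : ∀ i, 1 ≤ i → i ≤ n → 0 < Δt i)
    (hsum : ∑ i ∈ Finset.Icc 1 n, Δt i = T)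
    (L : ℕ → ℝ) (hLnonneg : ∀ i, 1 ≤ i → i ≤ n → 0 ≤ L i)
    (hLn : L n = Kg)
    (hrec : ∀ i, 2 ≤ i → i ≤ n →
      L (i - 1) ≤ max (L i * Real.exp (K₁ * Δt i) + K₂ * Δt i) (L n)) :
    ∀ i, 1 ≤ i → i ≤ n → L i ≤ Real.exp (K₁ * T) * (Kg + K₂ * T) := by
  intro i hi hin
  have hKg : 0 ≤ Kg := hLn ▸ hLnonneg n (hi.trans hin) le_rfl
  have hΔt_nonneg : ∀ j ∈ Icc 1 n, 0 ≤ Δt j := fun j hj => (hΔt j (by grind) (by grind)).le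
  have htail_sub : Ioc i n ⊆ Icc 1 n := fun j hj => by grind
  have hgronwall : L i ≤ expAffineBound K₁ K₂ Kg (∑ j ∈ Ioc i n, Δt j) :=
    hLn ▸ le_expAffineBound_of_le_max hK₁ hK₂ (fun j hj => hΔt_nonneg j (by grind))
      (hLn ▸ hKg) (fun k hk hkn => hrec (k + 1) (by omega) hkn) hi hin
  have htail_le : ∑ j ∈ Ioc i n, Δt j ≤ T :=
    hsum ▸ sum_le_sum_of_subset_of_nonneg htail_sub fun j hj _ => hΔt_nonneg j hj
  exact hgronwall.trans <| expAffineBound_le_expAffineBound hK₁ hK₂ hKg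
    (sum_nonneg fun j hj => hΔt_nonneg j (htail_sub hj)) htail_le

/-- Uniform bound on the Lipschitz constants L_i: if L_n = K_g and
L_{i-1} ≤ max(L_i e^{K₁Δt_i} + K₂Δt_i, L_n), then max_i L_i ≤ e^{K₁T}(K_g + K₂T). -/
theorem lipschitz_constants_uniform_bound
    (n : ℕ) (hn : 1 ≤ n) (T K₁ K₂ Kg : ℝ) (hK₁ : 0 ≤ K₁) (hK₂ : 0 ≤ K₂)
    (Δt : ℕ → ℝ) (hΔt : ∀ i, 1 ≤ i → i ≤ n → 0 < Δt i)
    (hsum : ∑ i ∈ Finset.Icc 1 n, Δt i = T)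
    (L : ℕ → ℝ) (hLnonneg : ∀ i, 1 ≤ i → i ≤ n → 0 ≤ L i)
    (hLn : L n = Kg)
    (hrec : ∀ i, 2 ≤ i → i ≤ n →
      L (i - 1) ≤ max (L i * Real.exp (K₁ * Δt i) + K₂ * Δt i) (L n)) :
    ∀ i, 1 ≤ i → i ≤ n → L i ≤ Real.exp (K₁ * T) * (Kg + K₂ * T) :=
  lipschitz_constants_uniform_bound_general n T K₁ K₂ Kg hK₁ hK₂ Δt hΔt hsum L hLnonneg hLn hrec
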